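/- arXiv:2001.11933 — 2 statements merged into one kernel-verified Lean document; each statement's English description precedes it below -/
import Mathlib

section
/- For all p, q ∈ ℝ³ one has the vector identity g(p,q)² (p⁰ + q⁰)(p + q) + 4[ p(−p⁰|q|² + q⁰ (p·q)) + q(−q⁰|p|² + p⁰ (p·q)) ] = s(p,q) (p⁰ − q⁰)(p − q) in ℝ³. -/
/-!
Both sides are combinations of `p` and `q` whose coefficients are polynomials in
`p⁰, q⁰, m²c², |p|², |q|², p·q`. Comparing them, the coefficient of `p` on the left exceeds the
one on the right by `4 p⁰ (q⁰² − m²c² − |q|²)`, and that of `q` by `4 q⁰ (p⁰² − m²c² − |p|²)`;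
both vanish on the mass shell `p⁰² = m²c² + |p|²`. The identity therefore holds in any module,
with `p⁰, q⁰` replaced by any square roots of `m²c² + |p|²` and `m²c² + |q|²`.
-/

noncomputable section

/-- Euclidean inner product on ℝ³. -/
def dot3 (p q : Fin 3 → ℝ) : ℝ := ∑ i, p i * q i

/-- The relativistic energy `p⁰ = √(m²c² + |p|²)`. -/
noncomputable def pZero (m c : ℝ) (p : Fin 3 → ℝ) : ℝ :=
  Real.sqrt (m ^ 2 * c ^ 2 + dot3 p p)

theorem dot3_self_nonneg (p : Fin 3 → ℝ) : 0 ≤ dot3 p p :=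
  Finset.sum_nonneg fun i _ => mul_self_nonneg (p i)

theorem pZero_sq (m c : ℝ) (p : Fin 3 → ℝ) : pZero m c p ^ 2 = m ^ 2 * c ^ 2 + dot3 p p :=
  Real.sq_sqrt (add_nonneg (by positivity) (dot3_self_nonneg p))

theorem smul_add_mass_shell_identity {R V : Type*} [CommRing R] [AddCommGroup V] [Module R V]
    {a b K pp qq pq : R} (ha : a ^ 2 = K + pp) (hb : b ^ 2 = K + qq) (u v : V) :
    (2 * (a * b - pq - K) * (a + b)) • (u + v)
      + (4 : R) • ((-a * qq + b * pq) • u + (-b * pp + a * pq) • v)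
    = (2 * (a * b - pq + K) * (a - b)) • (u - v) := by
  linear_combination (norm := module) hb • ((4 * a) • u) + ha • ((4 * b) • v)

theorem stmt1_general (m c : ℝ) (p q : Fin 3 → ℝ) :
    (2 * (pZero m c p * pZero m c q - dot3 p q - m ^ 2 * c ^ 2) *
        (pZero m c p + pZero m c q)) • (p + q)
      + (4 : ℝ) •
          ((-(pZero m c p) * dot3 q q + pZero m c q * dot3 p q) • p
            + (-(pZero m c q) * dot3 p p + pZero m c p * dot3 p q) • q)
    = (2 * (pZero m c p * pZero m c q - dot3 p q + m ^ 2 * c ^ 2) *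
        (pZero m c p - pZero m c q)) • (p - q) :=
  smul_add_mass_shell_identity (pZero_sq m c p) (pZero_sq m c q) p q

/-- For all `p, q ∈ ℝ³`, in ℝ³:
`g² (p⁰ + q⁰)(p + q) + 4[p(−p⁰|q|² + q⁰(p·q)) + q(−q⁰|p|² + p⁰(p·q))] = s (p⁰ − q⁰)(p − q)`,
where `s = 2(p⁰q⁰ − p·q + m²c²)` and `g² = 2(p⁰q⁰ − p·q − m²c²)`. -/
theorem stmt1 (m c : ℝ) (hm : 0 < m) (hc : 0 < c) (p q : Fin 3 → ℝ) :
    (2 * (pZero m c p * pZero m c q - dot3 p q - m ^ 2 * c ^ 2) *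
        (pZero m c p + pZero m c q)) • (p + q)
      + (4 : ℝ) •
          ((-(pZero m c p) * dot3 q q + pZero m c q * dot3 p q) • p
            + (-(pZero m c q) * dot3 p p + pZero m c p * dot3 p q) • q)
    = (2 * (pZero m c p * pZero m c q - dot3 p q + m ^ 2 * c ^ 2) *
        (pZero m c p - pZero m c q)) • (p - q) :=
  stmt1_general m c p q
end
end

section
/- For all p, q ∈ ℝ³ and every unit vector ω ∈ ℝ³ (|ω| = 1): (i) the denominator satisfies (p⁰ + q⁰)² − (ω·(p+q))² ≥ 4m²c² > 0, so that a(p,q,ω) = 2(p⁰ + q⁰)[ω·(p⁰ q − q⁰ p)] / [(p⁰ + q⁰)² − (ω·(p+q))²] is well defined; and (ii) setting p' = p + a(p,q,ω) ω and q' = q − a(p,q,ω) ω, the total energy is conserved: √(m²c² + |p'|²) + √(m²c² + |q'|²) = p⁰ + q⁰. -/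
/-!
Write `M = m²c²`, `P = p⁰`, `Q = q⁰`, `α = ω·p`, `β = ω·q`. Cauchy–Schwarz and `|ω| = 1` give the
mass-shell bounds `M + α² ≤ P²` and `M + β² ≤ Q²`, hence the reverse Cauchy–Schwarz inequality
`M + αβ ≤ PQ`, and expanding `(P + Q)² − (α + β)²` with it gives the lower bound `4M`.
For energy conservation, with `a = a(p,q,ω)` and `t = a(α + β)/(P + Q)` the new energies are
perfect squares, `M + |p'|² = (P + t)²` and `M + |q'|² = (Q − t)²`, and both `P + t` and `Q − t`
are positive, so the new energies add up to `P + Q`.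
-/

noncomputable section

/-- The Glassey–Strauss collision parameter
`a(p,q,ω) = 2(p⁰ + q⁰)[ω·(p⁰q − q⁰p)] / [(p⁰ + q⁰)² − (ω·(p+q))²]`. -/
noncomputable def aGS (m c : ℝ) (p q ω : Fin 3 → ℝ) : ℝ :=
  2 * (pZero m c p + pZero m c q) * dot3 ω (pZero m c p • q - pZero m c q • p) /
    ((pZero m c p + pZero m c q) ^ 2 - (dot3 ω (p + q)) ^ 2)

lemma dotProduct_self_nonneg {n : Type*} [Fintype n] (v : n → ℝ) : 0 ≤ v ⬝ᵥ v :=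
  Finset.sum_nonneg fun i _ => mul_self_nonneg (v i)

lemma sq_dotProduct_le {n : Type*} [Fintype n] (v w : n → ℝ) :
    (v ⬝ᵥ w) ^ 2 ≤ (v ⬝ᵥ v) * (w ⬝ᵥ w) := by
  simpa only [dotProduct, sq] using Finset.sum_mul_sq_le_sq_mul_sq Finset.univ v w

lemma add_smul_dotProduct_add_smul {n : Type*} [Fintype n] (v w : n → ℝ) (a : ℝ) :
    (v + a • w) ⬝ᵥ (v + a • w) = v ⬝ᵥ v + 2 * a * (w ⬝ᵥ v) + a ^ 2 * (w ⬝ᵥ w) := by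
  simp only [add_dotProduct, dotProduct_add, smul_dotProduct, dotProduct_smul, smul_eq_mul,
    dotProduct_comm v w]
  ring

def gsParam (P Q α β : ℝ) : ℝ :=
  2 * (P + Q) * (P * β - Q * α) / ((P + Q) ^ 2 - (α + β) ^ 2)

lemma gsParam_swap (P Q α β : ℝ) : gsParam Q P β α = -gsParam P Q α β := by
  rw [gsParam, gsParam, add_comm Q P, add_comm β α, ← neg_div]
  ring

section MassShell

variable {M P Q α β : ℝ}

lemma add_mul_le_mul_of_add_sq_le_sq (hM : 0 ≤ M) (hP : 0 ≤ P) (hQ : 0 ≤ Q)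
    (hα : M + α ^ 2 ≤ P ^ 2) (hβ : M + β ^ 2 ≤ Q ^ 2) : M + α * β ≤ P * Q := by
  refine le_of_sq_le_sq ?_ (mul_nonneg hP hQ)
  calc (M + α * β) ^ 2 ≤ (M + α ^ 2) * (M + β ^ 2) := by nlinarith [sq_nonneg (α - β)]
    _ ≤ P ^ 2 * Q ^ 2 := mul_le_mul hα hβ (by positivity) (sq_nonneg P)
    _ = (P * Q) ^ 2 := (mul_pow P Q 2).symm

lemma four_mul_le_sq_add_sub_sq_add (hM : 0 ≤ M) (hP : 0 ≤ P) (hQ : 0 ≤ Q)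
    (hα : M + α ^ 2 ≤ P ^ 2) (hβ : M + β ^ 2 ≤ Q ^ 2) :
    4 * M ≤ (P + Q) ^ 2 - (α + β) ^ 2 := by
  nlinarith [add_mul_le_mul_of_add_sq_le_sq hM hP hQ hα hβ]

lemma sq_add_gsParam (hPQ : P + Q ≠ 0) (hD : (P + Q) ^ 2 - (α + β) ^ 2 ≠ 0) :
    P ^ 2 + 2 * gsParam P Q α β * α + gsParam P Q α β ^ 2
      = (P + gsParam P Q α β * (α + β) / (P + Q)) ^ 2 := by
  unfold gsParam
  field_simp
  ring

lemma add_gsParam_pos (hP : 0 < P) (hQ : 0 < Q) (hα : α ^ 2 < P ^ 2)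
    (hD : 0 < (P + Q) ^ 2 - (α + β) ^ 2) :
    0 < P + gsParam P Q α β * (α + β) / (P + Q) := by
  have hP_sub : 0 < P - α := by nlinarith
  have hP_add : 0 < P + α := by nlinarith
  have key : P + gsParam P Q α β * (α + β) / (P + Q) =
      ((P + α) * (P + Q - (α + β)) ^ 2 + (P - α) * (P + Q + (α + β)) ^ 2) / 2
        / ((P + Q) ^ 2 - (α + β) ^ 2) := by
    unfold gsParam
    field_simp
    ring
  rw [key]
  refine div_pos (half_pos ?_) hD
  rcases le_total 0 (α + β) with hs | hs
  · have : 0 < P + Q + (α + β) := by linarith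
    positivity
  · have : 0 < P + Q - (α + β) := by linarith
    positivity

lemma sqrt_sq_add_gsParam (hM : 0 < M) (hP : 0 < P) (hQ : 0 < Q)
    (hα : M + α ^ 2 ≤ P ^ 2) (hβ : M + β ^ 2 ≤ Q ^ 2) :
    √(P ^ 2 + 2 * gsParam P Q α β * α + gsParam P Q α β ^ 2)
      = P + gsParam P Q α β * (α + β) / (P + Q) := by
  have hD : 0 < (P + Q) ^ 2 - (α + β) ^ 2 := by
    linarith [four_mul_le_sq_add_sub_sq_add hM.le hP.le hQ.le hα hβ]
  rw [sq_add_gsParam (by positivity) hD.ne',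
    Real.sqrt_sq (add_gsParam_pos hP hQ (by linarith) hD).le]

end MassShell

lemma dot3_eq_dotProduct (p q : Fin 3 → ℝ) : dot3 p q = p ⬝ᵥ q := rfl

lemma sq_pZero (m c : ℝ) (p : Fin 3 → ℝ) : pZero m c p ^ 2 = m ^ 2 * c ^ 2 + p ⬝ᵥ p :=
  Real.sq_sqrt (add_nonneg (by positivity) (dotProduct_self_nonneg p))

lemma pZero_pos {m c : ℝ} (hm : 0 < m) (hc : 0 < c) (p : Fin 3 → ℝ) : 0 < pZero m c p :=
  Real.sqrt_pos.mpr (add_pos_of_pos_of_nonneg (by positivity) (dotProduct_self_nonneg p))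

lemma add_sq_dotProduct_le_sq_pZero {ω : Fin 3 → ℝ} (hω : ω ⬝ᵥ ω = 1) (m c : ℝ)
    (p : Fin 3 → ℝ) : m ^ 2 * c ^ 2 + (ω ⬝ᵥ p) ^ 2 ≤ pZero m c p ^ 2 := by
  have := sq_dotProduct_le ω p
  rw [hω, one_mul] at this
  rw [sq_pZero]
  linarith

lemma aGS_eq_gsParam (m c : ℝ) (p q ω : Fin 3 → ℝ) :
    aGS m c p q ω = gsParam (pZero m c p) (pZero m c q) (ω ⬝ᵥ p) (ω ⬝ᵥ q) := by
  simp only [aGS, gsParam, dot3_eq_dotProduct, dotProduct_add, dotProduct_sub, dotProduct_smul,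
    smul_eq_mul]

/-- For all `p, q ∈ ℝ³` and unit vectors `ω`:
(i) `(p⁰ + q⁰)² − (ω·(p+q))² ≥ 4m²c² > 0`, so `a(p,q,ω)` is well defined; and
(ii) with `p' = p + a ω`, `q' = q − a ω`, total energy is conserved:
`√(m²c² + |p'|²) + √(m²c² + |q'|²) = p⁰ + q⁰`. -/
theorem stmt6 (m c : ℝ) (hm : 0 < m) (hc : 0 < c) (p q ω : Fin 3 → ℝ)
    (hω : dot3 ω ω = 1) :
    (4 * m ^ 2 * c ^ 2 ≤ (pZero m c p + pZero m c q) ^ 2 - (dot3 ω (p + q)) ^ 2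
        ∧ 0 < 4 * m ^ 2 * c ^ 2)
      ∧ Real.sqrt (m ^ 2 * c ^ 2 + dot3 (p + aGS m c p q ω • ω) (p + aGS m c p q ω • ω))
          + Real.sqrt (m ^ 2 * c ^ 2 + dot3 (q - aGS m c p q ω • ω) (q - aGS m c p q ω • ω))
        = pZero m c p + pZero m c q := by
  simp only [dot3_eq_dotProduct] at hω ⊢
  have hM : 0 < m ^ 2 * c ^ 2 := by positivity
  have hP := pZero_pos hm hc p
  have hQ := pZero_pos hm hc q
  have hα := add_sq_dotProduct_le_sq_pZero hω m c p
  have hβ := add_sq_dotProduct_le_sq_pZero hω m c q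
  refine ⟨⟨?_, by positivity⟩, ?_⟩
  · rw [dotProduct_add, mul_assoc]
    exact four_mul_le_sq_add_sub_sq_add hM.le hP.le hQ.le hα hβ
  rw [aGS_eq_gsParam]
  set a := gsParam (pZero m c p) (pZero m c q) (ω ⬝ᵥ p) (ω ⬝ᵥ q)
  have hp' : m ^ 2 * c ^ 2 + (p + a • ω) ⬝ᵥ (p + a • ω)
      = pZero m c p ^ 2 + 2 * a * (ω ⬝ᵥ p) + a ^ 2 := by
    rw [add_smul_dotProduct_add_smul, hω, sq_pZero]
    ring
  have hq' : m ^ 2 * c ^ 2 + (q - a • ω) ⬝ᵥ (q - a • ω)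
      = pZero m c q ^ 2 + 2 * (-a) * (ω ⬝ᵥ q) + (-a) ^ 2 := by
    rw [sub_eq_add_neg, ← neg_smul, add_smul_dotProduct_add_smul, hω, sq_pZero]
    ring
  -- exchanging the roles of `p` and `q` negates `a`, so both energies come from one scalar lemma
  rw [hp', hq', ← gsParam_swap, sqrt_sq_add_gsParam hM hP hQ hα hβ,
    sqrt_sq_add_gsParam hM hQ hP hβ hα, gsParam_swap, add_comm (pZero m c q), add_comm (ω ⬝ᵥ q)]
  ring
end
end
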